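/- Let f be a holomorphic function defined on a neighborhood of a point a ∈ ℂ with f(a) = 0 and f′(a) ≠ 0, and define F(x, y) = |f(x + iy)|²/2. Then there exists a neighborhood V of a such that for every initial point z₀ ∈ V, the ordinary differential equation dz/dt = −(∇²F(z))⁻¹ ∇F(z), z(0) = z₀, has a solution z : [0, ∞) → ℂ defined for all t ≥ 0 (with ∇²F(z(t)) invertible for all t), and z(t) → a as t → ∞. -/

import Mathlib

/-!
Near the simple zero `a`, the gradient of `F = |f|²/2` is `g = f · conj f'`, whose real
derivative at `a` is `|f'(a)|² • id`. By the inverse function theorem `g` is a local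
diffeomorphism with `g a = 0`, and along the Newton flow `ż = -(Dg)⁻¹ g(z)` the value `g(z)`
obeys `(d/dt) g(z) = -g(z)`. Hence the trajectories are `z(t) = g⁻¹(e^{-t} g(z₀))`, which exist
for all `t ≥ 0` and tend to `g⁻¹(0) = a`.
-/

open Filter Topology Real ComplexConjugate

section NewtonFlow

variable {E : Type*} [NormedAddCommGroup E] [NormedSpace ℝ E]

theorem OpenPartialHomeomorph.hasFDerivAt_symm_ringInverse (Φ : OpenPartialHomeomorph E E)
    {y : E} (hy : y ∈ Φ.target) {L : E →L[ℝ] E} (hL : IsUnit L)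
    (hΦ : HasFDerivAt Φ L (Φ.symm y)) : HasFDerivAt Φ.symm (Ring.inverse L) y := by
  obtain ⟨u, rfl⟩ := hL
  convert Φ.hasFDerivAt_symm (f' := ContinuousLinearEquiv.unitsEquiv ℝ E u) hy hΦ using 1
  rw [Ring.inverse_unit]
  rfl

theorem OpenPartialHomeomorph.hasDerivAt_symm_exp_neg_smul (Φ : OpenPartialHomeomorph E E)
    (y₀ : E) {t : ℝ} (ht : exp (-t) • y₀ ∈ Φ.target)
    (hd : DifferentiableAt ℝ Φ (Φ.symm (exp (-t) • y₀)))
    (hunit : IsUnit (fderiv ℝ Φ (Φ.symm (exp (-t) • y₀)))) :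
    HasDerivAt (fun s => Φ.symm (exp (-s) • y₀))
      (-(Ring.inverse (fderiv ℝ Φ (Φ.symm (exp (-t) • y₀))) (Φ (Φ.symm (exp (-t) • y₀))))) t := by
  have hexp : HasDerivAt (fun s => exp (-s) • y₀) (-(exp (-t) • y₀)) t := by
    simpa [neg_smul] using ((hasDerivAt_neg t).exp).smul_const y₀
  rw [Φ.right_inv ht, ← map_neg]
  exact (Φ.hasFDerivAt_symm_ringInverse ht hunit hd.hasFDerivAt).comp_hasDerivAt t hexp

theorem ContinuousLinearMap.isUnit_smul_id {c : ℝ} (hc : c ≠ 0) :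
    IsUnit (c • ContinuousLinearMap.id ℝ E) :=
  ⟨⟨c • .id ℝ E, c⁻¹ • .id ℝ E, by ext; simp [hc], by ext; simp [hc]⟩, rfl⟩

variable [CompleteSpace E]

theorem exists_newtonFlow_tendsto {g : E → E} {a : E} (hg : ContDiffAt ℝ 1 g a) (hga : g a = 0)
    (hunit : IsUnit (fderiv ℝ g a)) :
    ∃ V ∈ 𝓝 a, ∀ z₀ ∈ V, ∃ z : ℝ → E, z 0 = z₀ ∧
      (∀ t : ℝ, 0 ≤ t → IsUnit (fderiv ℝ g (z t)) ∧
        HasDerivWithinAt z (-(Ring.inverse (fderiv ℝ g (z t)) (g (z t)))) (Set.Ici 0) t) ∧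
      Tendsto z atTop (𝓝 a) := by
  have hgood : ∀ᶠ x in 𝓝 a, DifferentiableAt ℝ g x ∧ IsUnit (fderiv ℝ g x) :=
    ((hg.eventually (by simp)).mono fun x hx => hx.differentiableAt one_ne_zero).and
      ((hg.continuousAt_fderiv one_ne_zero).eventually (Units.isOpen.mem_nhds hunit))
  obtain ⟨u, hu⟩ := hunit
  have hstrict : HasStrictFDerivAt g (ContinuousLinearEquiv.unitsEquiv ℝ E u : E →L[ℝ] E) a :=
    (hg.hasStrictFDerivAt one_ne_zero).congr_fderiv (by ext; simp [hu])
  set Φ := hstrict.toOpenPartialHomeomorph g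
  have hΦ : (Φ : E → E) = g := hstrict.toOpenPartialHomeomorph_coe
  have hΦa : a ∈ Φ.source := hstrict.mem_toOpenPartialHomeomorph_source
  have hΦsymm : Φ.symm 0 = a := by rw [← hga, ← hΦ, Φ.left_inv hΦa]
  have h0 : (0 : E) ∈ Φ.target := by simpa [hΦ, hga] using Φ.map_source hΦa
  have hψ : ContinuousAt Φ.symm 0 := Φ.continuousAt_symm h0
  obtain ⟨ε, hε, hball⟩ : ∃ ε > 0, Metric.ball 0 ε ⊆ Φ.target ∩
      Φ.symm ⁻¹' {x | DifferentiableAt ℝ g x ∧ IsUnit (fderiv ℝ g x)} :=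
    Metric.mem_nhds_iff.1 <|
      inter_mem (Φ.open_target.mem_nhds h0) (hψ.preimage_mem_nhds (hΦsymm ▸ hgood))
  refine ⟨Φ.source ∩ g ⁻¹' Metric.ball 0 ε, inter_mem (Φ.open_source.mem_nhds hΦa)
    (hg.continuousAt.preimage_mem_nhds (by rw [hga]; exact Metric.ball_mem_nhds 0 hε)), ?_⟩
  rintro z₀ ⟨hz₀, hgz₀⟩
  have hflow : ∀ t : ℝ, 0 ≤ t → exp (-t) • g z₀ ∈ Metric.ball 0 ε := fun t ht =>
    (convex_ball 0 ε).smul_mem_of_zero_mem (Metric.mem_ball_self hε) hgz₀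
      ⟨(exp_pos _).le, exp_le_one_iff.2 (neg_nonpos.2 ht)⟩
  refine ⟨fun t => Φ.symm (exp (-t) • g z₀), by simp [← hΦ, Φ.left_inv hz₀], fun t ht => ?_, ?_⟩
  · obtain ⟨hΦt, hdiff, hunit⟩ := hball (hflow t ht)
    refine ⟨hunit, ?_⟩
    have := Φ.hasDerivAt_symm_exp_neg_smul (g z₀) hΦt (hΦ ▸ hdiff) (hΦ ▸ hunit)
    rw [hΦ] at this
    exact this.hasDerivWithinAt
  · have : Tendsto (fun t : ℝ => exp (-t) • g z₀) atTop (𝓝 0) := by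
      simpa using tendsto_exp_neg_atTop_nhds_zero.smul_const (g z₀)
    exact hΦsymm ▸ hψ.tendsto.comp this

end NewtonFlow

theorem hasGradientAt_norm_sq_div_two {f : ℂ → ℂ} {f' w : ℂ} (hf : HasDerivAt f f' w) :
    HasGradientAt (fun w => ‖f w‖ ^ 2 / 2) (f w * conj f') w := by
  rw [hasGradientAt_iff_hasFDerivAt]
  refine ((hf.hasFDerivAt.restrictScalars ℝ).norm_sq.mul_const (2⁻¹ : ℝ)).congr_fderiv ?_
  ext v
  simp only [smul_apply, ContinuousLinearMap.comp_apply,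
    ContinuousLinearMap.coe_restrictScalars', ContinuousLinearMap.toSpanSingleton_apply,
    smul_eq_mul, coe_innerSL_apply, Complex.inner, Complex.mul_re, Complex.conj_re,
    Complex.mul_im, Complex.conj_im, InnerProductSpace.toDual_apply_apply, nsmul_eq_mul]
  ring

theorem hasFDerivAt_mul_conj_deriv_of_eq_zero {f : ℂ → ℂ} {a : ℂ} (hf : DifferentiableAt ℂ f a)
    (hf' : DifferentiableAt ℂ (deriv f) a) (hfa : f a = 0) :
    HasFDerivAt (fun w => f w * conj (deriv f w))
      ((‖deriv f a‖ ^ 2 : ℝ) • ContinuousLinearMap.id ℝ ℂ) a := by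
  have hconj : HasFDerivAt (fun w => conj (deriv f w)) _ a :=
    Complex.conjCLE.hasFDerivAt.comp a (hf'.hasFDerivAt.restrictScalars ℝ)
  refine ((hf.hasFDerivAt.restrictScalars ℝ).mul' hconj).congr_fderiv ?_
  ext v
  simp [hfa, ← Complex.conj_mul']
  ring

/-- If `f` is holomorphic near a simple zero `a` (`f(a) = 0`, `f′(a) ≠ 0`) and
`F(z) = |f(z)|²/2` on `ℝ² ≅ ℂ`, then there is a neighborhood `V` of `a` such that for
every `z₀ ∈ V` the Newton flow for optimization `dz/dt = −(∇²F(z))⁻¹ ∇F(z)`,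
`z(0) = z₀`, has a global solution on `[0, ∞)` (with invertible Hessian along it)
converging to `a` as `t → ∞`. Here the Hessian is `fderiv ℝ (gradient F)`. -/
theorem newton_flow_optimization_local_convergence
    (f : ℂ → ℂ) (U : Set ℂ) (hU : IsOpen U) (a : ℂ) (ha : a ∈ U)
    (hf : DifferentiableOn ℂ f U) (hfa : f a = 0) (hfa' : deriv f a ≠ 0) :
    ∃ V ∈ nhds a, ∀ z₀ ∈ V, ∃ z : ℝ → ℂ,
      z 0 = z₀ ∧
      (∀ t : ℝ, 0 ≤ t →
        IsUnit (fderiv ℝ (gradient (fun w => ‖f w‖ ^ 2 / 2)) (z t)) ∧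
        HasDerivWithinAt z
          (-(Ring.inverse (fderiv ℝ (gradient (fun w => ‖f w‖ ^ 2 / 2)) (z t))
              (gradient (fun w => ‖f w‖ ^ 2 / 2) (z t))))
          (Set.Ici 0) t) ∧
      Tendsto z atTop (nhds a) := by
  have hanalytic : AnalyticOnNhd ℂ f U := hf.analyticOnNhd hU
  set g : ℂ → ℂ := fun w => f w * conj (deriv f w)
  have hgrad : gradient (fun w => ‖f w‖ ^ 2 / 2) =ᶠ[𝓝 a] g :=
    eventually_of_mem (hU.mem_nhds ha) fun w hw =>
      (hasGradientAt_norm_sq_div_two (hanalytic w hw).differentiableAt.hasDerivAt).gradient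
  have hg : ContDiffAt ℝ 1 g a :=
    ((hanalytic a ha).restrictScalars.mul
      ((Complex.conjCLE.toContinuousLinearMap.analyticAt _).comp
        (hanalytic a ha).deriv.restrictScalars)).contDiffAt
  have hunit : IsUnit (fderiv ℝ g a) := by
    rw [(hasFDerivAt_mul_conj_deriv_of_eq_zero (hanalytic a ha).differentiableAt
      (hanalytic a ha).deriv.differentiableAt hfa).fderiv]
    exact ContinuousLinearMap.isUnit_smul_id (by simpa using hfa')
  exact exists_newtonFlow_tendsto (hg.congr_of_eventuallyEq hgrad)
    (by simp [hgrad.eq_of_nhds, g, hfa]) (by rwa [hgrad.fderiv_eq])
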